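/- Let L(t) be the curve of subspaces as above with Σ_{j=1}^d θ_j^2 = 1, and x ∈ R^D with dist(x, L(t)) > 0. Then the second derivative of t ↦ dist(x, L(t)) satisfies |d²/dt² dist(x, L(t))| ≤ 3‖x‖² / dist(x, L(t)). -/

import Mathlib

open RealInnerProductSpace

lemma distL_sq_eq {D n : ℕ} (w : Fin n → EuclideanSpace ℝ (Fin D)) (hw : Orthonormal ℝ w)
    (x : EuclideanSpace ℝ (Fin D)) :
    (‖x - ((Submodule.span ℝ (Set.range w)).orthogonalProjection x :
        EuclideanSpace ℝ (Fin D))‖) ^ 2 = ‖x‖ ^ 2 - ∑ j, ⟪w j, x⟫ ^ 2 := by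
  classical
  set K := Submodule.span ℝ (Set.range w)
  set P : EuclideanSpace ℝ (Fin D) := ∑ j, ⟪w j, x⟫ • w j with hP
  have hPmem : P ∈ K := Submodule.sum_mem _ fun j _ =>
    Submodule.smul_mem _ _ (Submodule.subset_span ⟨j, rfl⟩)
  have hgen : ∀ j, ⟪x - P, w j⟫ = 0 := by
    intro j
    have h1 : ⟪P, w j⟫ = ⟪w j, x⟫ := by
      simpa using hw.inner_left_fintype (fun j => ⟪w j, x⟫) j
    rw [inner_sub_left, h1, real_inner_comm, sub_self]
  have hperp : ∀ y ∈ K, ⟪x - P, y⟫ = 0 := by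
    intro y hy
    induction hy using Submodule.span_induction with
    | mem y hy => obtain ⟨j, rfl⟩ := hy; exact hgen j
    | zero => simp
    | add y z _ _ hy hz => rw [inner_add_right, hy, hz, add_zero]
    | smul r y _ hy => rw [real_inner_smul_right, hy, mul_zero]
  have hproj : (K.orthogonalProjection x : EuclideanSpace ℝ (Fin D)) = P := by
    rw [← Submodule.starProjection_apply]
    exact Submodule.eq_starProjection_of_mem_of_inner_eq_zero hPmem hperp
  have hPx : ⟪x, P⟫ = ‖P‖ ^ 2 := by
    have := hperp P hPmem
    rw [inner_sub_left, sub_eq_zero] at this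
    rw [this, real_inner_self_eq_norm_sq]
  have hPnorm : ‖P‖ ^ 2 = ∑ j, ⟪w j, x⟫ ^ 2 := by
    rw [← real_inner_self_eq_norm_sq, hP]
    have := hw.inner_sum (fun j => ⟪w j, x⟫) (fun j => ⟪w j, x⟫) Finset.univ
    simpa [sq] using this
  rw [hproj, norm_sub_sq_real, hPx, hPnorm]
  ring



/-- Distance from a point to a subspace (`dist(x,L) = ‖Q_L x‖`). -/
noncomputable def distL {D : ℕ} (x : EuclideanSpace ℝ (Fin D))
    (L : Submodule ℝ (EuclideanSpace ℝ (Fin D))) : ℝ :=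
  ‖x - (L.orthogonalProjection x : EuclideanSpace ℝ (Fin D))‖

/-- The curve of subspaces `L(t) = span(v₁ cos(tθ₁) + u₁ sin(tθ₁), …, v_d cos(tθ_d) + u_d sin(tθ_d))`. -/
noncomputable def rotCurve {D : ℕ} (d : ℕ) (v u : Fin d → EuclideanSpace ℝ (Fin D))
    (θ : Fin d → ℝ) (t : ℝ) : Submodule ℝ (EuclideanSpace ℝ (Fin D)) :=
  Submodule.span ℝ (Set.range fun j : Fin d =>
    Real.cos (t * θ j) • v j + Real.sin (t * θ j) • u j)

set_option maxHeartbeats 1000000 in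
/-- with `{v₁,…,v_d,u₁,…,u_d}` orthonormal and `Σ_j θ_j² = 1`, at any `t`
with `dist(x,L(t)) > 0`, the second derivative of `t ↦ dist(x,L(t))` satisfies
`|d²/dt² dist(x,L(t))| ≤ 3‖x‖² / dist(x,L(t))`. -/
theorem stmt1 {D d : ℕ} (v u : Fin d → EuclideanSpace ℝ (Fin D))
    (θ : Fin d → ℝ) (hθ : ∑ j, θ j ^ 2 = 1)
    (horth : Orthonormal ℝ (Sum.elim v u))
    (x : EuclideanSpace ℝ (Fin D)) (t : ℝ)
    (hdist : 0 < distL x (rotCurve d v u θ t))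
    (g : ℝ → ℝ) (hg : ∀ s, HasDerivAt (fun r => distL x (rotCurve d v u θ r)) (g s) s)
    (g' : ℝ) (hg' : HasDerivAt g g' t) :
    |g'| ≤ 3 * ‖x‖ ^ 2 / distL x (rotCurve d v u θ t) := by
  classical
  have hON := orthonormal_iff_ite.mp horth
  have hvv : ∀ j k : Fin d, ⟪v j, v k⟫ = if j = k then (1:ℝ) else 0 := by
    intro j k; simpa using hON (Sum.inl j) (Sum.inl k)
  have huu : ∀ j k : Fin d, ⟪u j, u k⟫ = if j = k then (1:ℝ) else 0 := by
    intro j k; simpa using hON (Sum.inr j) (Sum.inr k)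
  have hvu : ∀ j k : Fin d, ⟪v j, u k⟫ = 0 := by
    intro j k; simpa using hON (Sum.inl j) (Sum.inr k)
  have huv : ∀ j k : Fin d, ⟪u j, v k⟫ = 0 := by
    intro j k; simpa using hON (Sum.inr j) (Sum.inl k)
  have hinner : ∀ (p q p' q' : ℝ) (j k : Fin d),
      ⟪p • v j + q • u j, p' • v k + q' • u k⟫ =
        (p * p' + q * q') * (if j = k then (1:ℝ) else 0) := by
    intro p q p' q' j k
    simp only [inner_add_left, inner_add_right, real_inner_smul_left, real_inner_smul_right,
      hvv, huu, hvu, huv]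
    ring
  set a : Fin d → ℝ := fun j => ⟪v j, x⟫ with ha
  set b : Fin d → ℝ := fun j => ⟪u j, x⟫ with hb
  set c : ℝ → Fin d → ℝ := fun s j => Real.cos (s * θ j) * a j + Real.sin (s * θ j) * b j
    with hc_def
  set e : ℝ → Fin d → ℝ := fun s j => -Real.sin (s * θ j) * a j + Real.cos (s * θ j) * b j
    with he_def
  set F : ℝ → ℝ := fun s => ‖x‖ ^ 2 - ∑ j, c s j ^ 2 with hF_def
  -- orthonormality of the rotating frame
  have hWon : ∀ s : ℝ, Orthonormal ℝ
      (fun j : Fin d => Real.cos (s * θ j) • v j + Real.sin (s * θ j) • u j) := by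
    intro s
    rw [orthonormal_iff_ite]
    intro j k
    rw [hinner]
    by_cases h : j = k
    · subst h; simp only [if_true, eq_self_iff_true, mul_one]
      linear_combination Real.cos_sq_add_sin_sq (s * θ j)
    · simp [h]
  -- distance squared formula
  have hdsq : ∀ s : ℝ, distL x (rotCurve d v u θ s) ^ 2 = F s := by
    intro s
    have := distL_sq_eq _ (hWon s) x
    rw [distL, rotCurve, this, hF_def]
    congr 1
    refine Finset.sum_congr rfl fun j _ => ?_
    congr 1
    simp only [inner_add_left, real_inner_smul_left, hc_def, ha, hb]
  -- derivatives
  have hc' : ∀ (s : ℝ) (j : Fin d), HasDerivAt (fun r => c r j) (θ j * e s j) s := by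
    intro s j
    have h1 : HasDerivAt (fun r : ℝ => r * θ j) (θ j) s := by
      simpa using (hasDerivAt_id s).mul_const (θ j)
    have hcos : HasDerivAt (fun r => Real.cos (r * θ j))
        (-Real.sin (s * θ j) * θ j) s := by
      simpa [Function.comp_def] using (Real.hasDerivAt_cos (s * θ j)).comp s h1
    have hsin : HasDerivAt (fun r => Real.sin (r * θ j))
        (Real.cos (s * θ j) * θ j) s := by
      simpa [Function.comp_def] using (Real.hasDerivAt_sin (s * θ j)).comp s h1
    have := (hcos.mul_const (a j)).fun_add (hsin.mul_const (b j))
    refine this.congr_deriv ?_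
    simp only [he_def]; ring
  have he' : ∀ (s : ℝ) (j : Fin d), HasDerivAt (fun r => e r j) (-(θ j) * c s j) s := by
    intro s j
    have h1 : HasDerivAt (fun r : ℝ => r * θ j) (θ j) s := by
      simpa using (hasDerivAt_id s).mul_const (θ j)
    have hcos : HasDerivAt (fun r => Real.cos (r * θ j))
        (-Real.sin (s * θ j) * θ j) s := by
      simpa [Function.comp_def] using (Real.hasDerivAt_cos (s * θ j)).comp s h1
    have hsin : HasDerivAt (fun r => Real.sin (r * θ j))
        (Real.cos (s * θ j) * θ j) s := by
      simpa [Function.comp_def] using (Real.hasDerivAt_sin (s * θ j)).comp s h1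
    have := ((hsin.fun_neg).mul_const (a j)).fun_add (hcos.mul_const (b j))
    refine this.congr_deriv ?_
    simp only [hc_def]; ring
  set G : ℝ → ℝ := fun s => -2 * ∑ j, θ j * (c s j * e s j) with hG_def
  have hF' : ∀ s : ℝ, HasDerivAt F (G s) s := by
    intro s
    have hsum : HasDerivAt (fun r => ∑ j, c r j ^ 2)
        (∑ j, 2 * c s j ^ 1 * (θ j * e s j)) s :=
      HasDerivAt.fun_sum fun j _ => (hc' s j).fun_pow 2
    have := (hasDerivAt_const s (‖x‖ ^ 2)).fun_sub hsum
    refine this.congr_deriv ?_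
    simp only [hG_def, Finset.mul_sum, zero_sub, ← Finset.sum_neg_distrib]
    exact Finset.sum_congr rfl fun j _ => by ring
  set H : ℝ := -2 * ∑ j, θ j ^ 2 * (e t j ^ 2 - c t j ^ 2) with hH_def
  have hG' : HasDerivAt G H t := by
    have hsum : HasDerivAt (fun r => ∑ j, θ j * (c r j * e r j))
        (∑ j, θ j * ((θ j * e t j) * e t j + c t j * (-(θ j) * c t j))) t :=
      HasDerivAt.fun_sum fun j _ => (HasDerivAt.const_mul (θ j) ((hc' t j).fun_mul (he' t j)))
    have := hsum.const_mul (-2 : ℝ)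
    refine this.congr_deriv ?_
    simp only [hH_def]
    congr 1
    exact Finset.sum_congr rfl fun j _ => by ring
  -- Bessel at time t
  set w2 : Fin d ⊕ Fin d → EuclideanSpace ℝ (Fin D) :=
    Sum.elim (fun j => Real.cos (t * θ j) • v j + Real.sin (t * θ j) • u j)
      (fun j => -Real.sin (t * θ j) • v j + Real.cos (t * θ j) • u j) with hw2_def
  have hw2on : Orthonormal ℝ w2 := by
    rw [orthonormal_iff_ite]
    rintro (j | j) (k | k)
    · simp only [hw2_def, Sum.elim_inl, hinner, Sum.inl.injEq]
      by_cases h : j = k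
      · subst h; simp; linear_combination Real.sin_sq_add_cos_sq (t * θ j)
      · simp [h]
    · simp only [hw2_def, Sum.elim_inl, Sum.elim_inr, hinner]
      by_cases h : j = k
      · subst h; simp; ring
      · simp [h]
    · simp only [hw2_def, Sum.elim_inl, Sum.elim_inr, hinner]
      by_cases h : j = k
      · subst h; simp; ring
      · simp [h]
    · simp only [hw2_def, Sum.elim_inr, hinner, Sum.inr.injEq]
      by_cases h : j = k
      · subst h; simp; linear_combination Real.sin_sq_add_cos_sq (t * θ j)
      · simp [h]
  have key : (∑ j, c t j ^ 2) + (∑ j, e t j ^ 2) ≤ ‖x‖ ^ 2 := by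
    have h := hw2on.sum_inner_products_le (s := Finset.univ) x
    rw [Fintype.sum_sum_type] at h
    have h1 : ∀ j : Fin d, ⟪w2 (Sum.inl j), x⟫ = c t j := by
      intro j
      simp only [hw2_def, Sum.elim_inl, inner_add_left, real_inner_smul_left, hc_def, ha, hb]
    have h2 : ∀ j : Fin d, ⟪w2 (Sum.inr j), x⟫ = e t j := by
      intro j
      simp only [hw2_def, Sum.elim_inr, inner_add_left, real_inner_smul_left, he_def, ha, hb]
    simpa [h1, h2, Real.norm_eq_abs, sq_abs] using h
  -- positivity
  set ρ : ℝ := distL x (rotCurve d v u θ t) with hρ_def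
  have hρsq : ρ ^ 2 = F t := hdsq t
  have hρpos : 0 < ρ := hdist
  have hFt : 0 < F t := by rw [← hρsq]; positivity
  have hρ_eq : ρ = Real.sqrt (F t) := by
    rw [← hρsq, Real.sqrt_sq hρpos.le]
  -- f = sqrt ∘ F
  have hfeq : (fun r => distL x (rotCurve d v u θ r)) = fun r => Real.sqrt (F r) := by
    funext s
    have h0 : 0 ≤ distL x (rotCurve d v u θ s) := norm_nonneg _
    rw [← hdsq s, Real.sqrt_sq h0]
  have hev : ∀ᶠ s in nhds t, 0 < F s := by
    have := (hF' t).continuousAt.preimage_mem_nhds (Ioi_mem_nhds hFt)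
    filter_upwards [this] with s hs using hs
  set φ : ℝ → ℝ := fun s => G s / (2 * Real.sqrt (F s)) with hφ_def
  have heq : g =ᶠ[nhds t] φ := by
    filter_upwards [hev] with s hs
    have h1 : HasDerivAt (fun r => Real.sqrt (F r)) (g s) s := hfeq ▸ hg s
    have h2 := (hF' s).sqrt hs.ne'
    exact h1.unique h2
  have hden : HasDerivAt (fun s => 2 * Real.sqrt (F s))
      (2 * (G t / (2 * Real.sqrt (F t)))) t := ((hF' t).sqrt hFt.ne').const_mul 2
  have hdenne : 2 * Real.sqrt (F t) ≠ 0 := by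
    have : 0 < Real.sqrt (F t) := Real.sqrt_pos.mpr hFt
    positivity
  have hφ' : HasDerivAt φ
      ((H * (2 * Real.sqrt (F t)) - G t * (2 * (G t / (2 * Real.sqrt (F t))))) /
        (2 * Real.sqrt (F t)) ^ 2) t := hG'.div hden hdenne
  have hg'eq : g' = (H * (2 * ρ) - G t * (2 * (G t / (2 * ρ)))) / (2 * ρ) ^ 2 := by
    have := hφ'.congr_of_eventuallyEq heq
    rw [hρ_eq]
    exact hg'.unique this
  -- bounds
  have hX : (0:ℝ) ≤ ‖x‖ ^ 2 := by positivity
  have hθj : ∀ j : Fin d, θ j ^ 2 ≤ 1 := by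
    intro j
    rw [← hθ]
    exact Finset.single_le_sum (fun i _ => sq_nonneg (θ i)) (Finset.mem_univ j)
  have hcle : ∑ j, c t j ^ 2 ≤ ‖x‖ ^ 2 := by
    have : (0:ℝ) ≤ ∑ j, e t j ^ 2 := Finset.sum_nonneg fun j _ => sq_nonneg _
    linarith
  have hele : ∑ j, e t j ^ 2 ≤ ρ ^ 2 := by
    rw [hρsq]
    show ∑ j, e t j ^ 2 ≤ ‖x‖ ^ 2 - ∑ j, c t j ^ 2
    linarith [key]
  have hcj : ∀ j : Fin d, c t j ^ 2 ≤ ‖x‖ ^ 2 := by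
    intro j
    calc c t j ^ 2 ≤ ∑ i, c t i ^ 2 :=
          Finset.single_le_sum (f := fun i => c t i ^ 2) (fun i _ => sq_nonneg _)
            (Finset.mem_univ j)
      _ ≤ ‖x‖ ^ 2 := hcle
  have hej : ∀ j : Fin d, e t j ^ 2 ≤ ‖x‖ ^ 2 := by
    intro j
    have h1 : e t j ^ 2 ≤ ∑ i, e t i ^ 2 :=
      Finset.single_le_sum (f := fun i => e t i ^ 2) (fun i _ => sq_nonneg _)
        (Finset.mem_univ j)
    have : (0:ℝ) ≤ ∑ j, c t j ^ 2 := Finset.sum_nonneg fun j _ => sq_nonneg _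
    linarith [key]
  have hHle : |H| ≤ 4 * ‖x‖ ^ 2 := by
    rw [hH_def, abs_mul]
    have h1 : |∑ j, θ j ^ 2 * (e t j ^ 2 - c t j ^ 2)| ≤
        ∑ j, θ j ^ 2 * (2 * ‖x‖ ^ 2) := by
      refine (Finset.abs_sum_le_sum_abs _ _).trans (Finset.sum_le_sum fun j _ => ?_)
      rw [abs_mul, abs_of_nonneg (sq_nonneg (θ j))]
      have : |e t j ^ 2 - c t j ^ 2| ≤ 2 * ‖x‖ ^ 2 := by
        rw [abs_sub_le_iff]
        constructor <;> nlinarith [hej j, hcj j, sq_nonneg (c t j), sq_nonneg (e t j)]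
      exact mul_le_mul_of_nonneg_left this (sq_nonneg (θ j))
    rw [← Finset.sum_mul] at h1
    rw [hθ] at h1
    calc |(-2:ℝ)| * |∑ j, θ j ^ 2 * (e t j ^ 2 - c t j ^ 2)| ≤ 2 * (1 * (2 * ‖x‖ ^ 2)) := by
          rw [abs_neg, abs_two]
          exact mul_le_mul_of_nonneg_left h1 (by norm_num)
      _ = 4 * ‖x‖ ^ 2 := by ring
  have hGle : G t ^ 2 ≤ 4 * ‖x‖ ^ 2 * ρ ^ 2 := by
    simp only [hG_def]
    have hcs : (∑ j, (θ j * c t j) * e t j) ^ 2 ≤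
        (∑ j, (θ j * c t j) ^ 2) * ∑ j, e t j ^ 2 :=
      Finset.sum_mul_sq_le_sq_mul_sq _ _ _
    have h1 : ∑ j, (θ j * c t j) ^ 2 ≤ ‖x‖ ^ 2 := by
      calc ∑ j, (θ j * c t j) ^ 2 ≤ ∑ j, c t j ^ 2 := by
            refine Finset.sum_le_sum fun j _ => ?_
            have := hθj j
            nlinarith [sq_nonneg (c t j)]
        _ ≤ ‖x‖ ^ 2 := hcle
    have h2 : (∑ j, θ j * (c t j * e t j)) ^ 2 ≤ ‖x‖ ^ 2 * ρ ^ 2 := by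
      have hsum_eq : ∑ j, θ j * (c t j * e t j) = ∑ j, (θ j * c t j) * e t j := by
        refine Finset.sum_congr rfl fun j _ => by ring
      rw [hsum_eq]
      calc (∑ j, (θ j * c t j) * e t j) ^ 2 ≤ (∑ j, (θ j * c t j) ^ 2) * ∑ j, e t j ^ 2 := hcs
        _ ≤ ‖x‖ ^ 2 * ρ ^ 2 := by
            apply mul_le_mul h1 hele (Finset.sum_nonneg fun j _ => sq_nonneg _) hX
    have hexp : (-2 * ∑ j, θ j * (c t j * e t j)) ^ 2 =
        4 * (∑ j, θ j * (c t j * e t j)) ^ 2 := by ring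
    rw [hexp]
    linarith [h2]
  -- final algebra
  have hg'eq2 : g' = (2 * H * ρ ^ 2 - G t ^ 2) / (4 * ρ ^ 3) := by
    rw [hg'eq]
    field_simp
    ring
  rw [hg'eq2]
  rw [abs_div, abs_of_pos (by positivity : (0:ℝ) < 4 * ρ ^ 3)]
  have hnum : |2 * H * ρ ^ 2 - G t ^ 2| ≤ 12 * ‖x‖ ^ 2 * ρ ^ 2 := by
    have h1 : |2 * H * ρ ^ 2| ≤ 8 * ‖x‖ ^ 2 * ρ ^ 2 := by
      rw [abs_mul, abs_mul, abs_two, abs_of_nonneg (sq_nonneg ρ)]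
      nlinarith [hHle, sq_nonneg ρ, abs_nonneg H]
    have h2 : |G t ^ 2| ≤ 4 * ‖x‖ ^ 2 * ρ ^ 2 := by
      rw [abs_of_nonneg (sq_nonneg _)]; exact hGle
    calc |2 * H * ρ ^ 2 - G t ^ 2| ≤ |2 * H * ρ ^ 2| + |G t ^ 2| := abs_sub _ _
      _ ≤ 12 * ‖x‖ ^ 2 * ρ ^ 2 := by linarith
  calc |2 * H * ρ ^ 2 - G t ^ 2| / (4 * ρ ^ 3) ≤ (12 * ‖x‖ ^ 2 * ρ ^ 2) / (4 * ρ ^ 3) := by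
        apply div_le_div_of_nonneg_right hnum (by positivity) |>.trans_eq rfl
    _ = 3 * ‖x‖ ^ 2 / ρ := by
        field_simp
        ring
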